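/- Let q > 0, let s ∈ (0,1), and let h : (0,q) → ℝ be non-increasing and right continuous. Then J(h,(0,q),s) = (1/2)·inf{ h(u) − h(u + (1−s)q) : 0 < u < sq }. -/
import Mathlib


open MeasureTheory Set

/-- The John–Strömberg functional
`J(f,E,s) = inf_{c ∈ ℝ} inf {α ≥ 0 : μ({x ∈ E : |f(x) − c| > α}) < s·μ(E)}`. -/
noncomputable def JS {X : Type*} [MeasurableSpace X] (μ : Measure X)
    (f : X → ℝ) (E : Set X) (s : ℝ) : ℝ :=
  sInf {α : ℝ | 0 ≤ α ∧ ∃ c : ℝ, μ {x ∈ E | α < |f x - c|} < ENNReal.ofReal s * μ E}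

theorem stmt10 (q : ℝ) (hq : 0 < q) (s : ℝ) (hs : s ∈ Set.Ioo (0:ℝ) 1)
    (h : ℝ → ℝ) (hmono : AntitoneOn h (Set.Ioo 0 q))
    (hrc : ∀ t ∈ Set.Ioo (0:ℝ) q, ContinuousWithinAt h (Set.Ioo t q) t) :
    JS volume h (Set.Ioo 0 q) s =
      (1/2) * sInf ((fun u => h u - h (u + (1 - s) * q)) '' Set.Ioo 0 (s * q)) := by
  obtain ⟨hs0, hs1⟩ := hs
  have hsq : 0 < s * q := mul_pos hs0 hq
  have h1s : 0 < 1 - s := by linarith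
  have h1sq : 0 < (1 - s) * q := mul_pos h1s hq
  have hmemE : ∀ u ∈ Set.Ioo 0 (s * q), u ∈ Set.Ioo (0:ℝ) q := by
    intro u hu
    exact ⟨hu.1, lt_trans hu.2 (by nlinarith)⟩
  have hmemE' : ∀ u ∈ Set.Ioo 0 (s * q), u + (1 - s) * q ∈ Set.Ioo (0:ℝ) q := by
    intro u hu
    refine ⟨add_pos hu.1 h1sq, ?_⟩
    have := hu.2
    nlinarith
  set I : Set ℝ := (fun u => h u - h (u + (1 - s) * q)) '' Set.Ioo 0 (s * q) with hI
  set m : ℝ := sInf I with hm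
  have hDnn : ∀ u ∈ Set.Ioo 0 (s * q), 0 ≤ h u - h (u + (1 - s) * q) := by
    intro u hu
    have := hmono (hmemE u hu) (hmemE' u hu) (le_add_of_nonneg_right h1sq.le)
    linarith
  have hIne : I.Nonempty := ⟨_, ⟨s * q / 2, ⟨half_pos hsq, half_lt_self hsq⟩, rfl⟩⟩
  have hIbdd : BddBelow I := ⟨0, by rintro x ⟨u, hu, rfl⟩; exact hDnn u hu⟩
  have hvolE : ENNReal.ofReal s * volume (Set.Ioo (0:ℝ) q) = ENNReal.ofReal (s * q) := by
    rw [Real.volume_Ioo, sub_zero, ← ENNReal.ofReal_mul hs0.le]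
  set S : Set ℝ := {α : ℝ | 0 ≤ α ∧ ∃ c : ℝ,
    volume {x ∈ Set.Ioo (0:ℝ) q | α < |h x - c|} < ENNReal.ofReal s * volume (Set.Ioo (0:ℝ) q)}
    with hS
  have hJS : JS volume h (Set.Ioo 0 q) s = sInf S := rfl
  have hSbdd : BddBelow S := ⟨0, fun x hx => hx.1⟩
  -- key construction: for any u and ε > 0, (D u + ε)/2 ∈ S
  have key : ∀ u ∈ Set.Ioo 0 (s * q), ∀ ε : ℝ, 0 < ε →
      (h u - h (u + (1 - s) * q) + ε) / 2 ∈ S := by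
    intro u hu ε hε
    set v := u + (1 - s) * q with hv
    have hvE : v ∈ Set.Ioo (0:ℝ) q := hmemE' u hu
    have huE : u ∈ Set.Ioo (0:ℝ) q := hmemE u hu
    have hcont := hrc v hvE
    rw [Metric.continuousWithinAt_iff] at hcont
    obtain ⟨δ, hδ, hδ'⟩ := hcont (ε / 2) (half_pos hε)
    refine ⟨by have := hDnn u hu; linarith, (h u + h v - ε) / 2, ?_⟩
    set M := min (v + δ) q with hM
    have hvM : v < M := lt_min (by linarith) hvE.2
    have hMq : M ≤ q := min_le_right _ _
    have hsub : {x ∈ Set.Ioo (0:ℝ) q | (h u - h v + ε) / 2 < |h x - (h u + h v - ε) / 2|}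
        ⊆ Set.Ioo 0 u ∪ Set.Ico M q := by
      rintro x ⟨hxE, hxbad⟩
      by_contra hx
      simp only [Set.mem_union, not_or] at hx
      obtain ⟨hx1, hx2⟩ := hx
      have hux : u ≤ x := by
        by_contra hc
        exact hx1 ⟨hxE.1, lt_of_not_ge hc⟩
      have hxM : x < M := by
        by_contra hc
        exact hx2 ⟨le_of_not_gt hc, hxE.2⟩
      have hupper : h x ≤ h u := hmono huE hxE hux
      have hlower : h v - ε ≤ h x := by
        rcases le_or_gt x v with hxv | hxv
        · have := hmono hxE hvE hxv
          linarith
        · have hxIoo : x ∈ Set.Ioo v q := ⟨hxv, hxE.2⟩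
          have hdist : dist x v < δ := by
            rw [Real.dist_eq, abs_of_pos (by linarith)]
            have : x < v + δ := lt_of_lt_of_le hxM (min_le_left _ _)
            linarith
          have := hδ' hxIoo hdist
          rw [Real.dist_eq] at this
          have := abs_lt.mp this
          linarith [this.1]
      have habs : |h x - (h u + h v - ε) / 2| ≤ (h u - h v + ε) / 2 := by
        rw [abs_le]
        constructor <;> linarith
      linarith
    have hmeas : volume {x ∈ Set.Ioo (0:ℝ) q | (h u - h v + ε) / 2 < |h x - (h u + h v - ε) / 2|}
        ≤ ENNReal.ofReal (u + (q - M)) := by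
      calc volume {x ∈ Set.Ioo (0:ℝ) q | (h u - h v + ε) / 2 < |h x - (h u + h v - ε) / 2|}
          ≤ volume (Set.Ioo 0 u ∪ Set.Ico M q) := measure_mono hsub
        _ ≤ volume (Set.Ioo (0:ℝ) u) + volume (Set.Ico M q) := measure_union_le _ _
        _ = ENNReal.ofReal (u - 0) + ENNReal.ofReal (q - M) := by
            rw [Real.volume_Ioo, Real.volume_Ico]
        _ = ENNReal.ofReal (u + (q - M)) := by
            rw [sub_zero, ← ENNReal.ofReal_add huE.1.le (by linarith)]
    refine lt_of_le_of_lt hmeas ?_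
    rw [hvolE]
    refine (ENNReal.ofReal_lt_ofReal_iff hsq).mpr ?_
    have h2 := hu.2
    nlinarith
  apply le_antisymm
  · -- JS ≤ m/2
    rw [hJS]
    have : ∀ ε : ℝ, 0 < ε → sInf S ≤ 1 / 2 * m + ε := by
      intro ε hε
      obtain ⟨a, haI, ha⟩ := Real.lt_sInf_add_pos hIne hε
      obtain ⟨u, hu, rfl⟩ := haI
      have hαS := key u hu ε hε
      have hle := csInf_le hSbdd hαS
      have ha2 : h u - h (u + (1 - s) * q) < sInf I + ε := ha
      rw [← hm] at ha2
      linarith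
    exact le_of_forall_pos_le_add this
  · -- m/2 ≤ JS
    rw [hJS]
    have hSne : S.Nonempty := ⟨_, key (s * q / 2) ⟨half_pos hsq, half_lt_self hsq⟩ 1 one_pos⟩
    apply le_csInf hSne
    rintro α ⟨hα0, c, hc⟩
    set G : Set ℝ := {x ∈ Set.Ioo (0:ℝ) q | |h x - c| ≤ α} with hG
    have hGsub : G ⊆ Set.Ioo 0 q := fun x hx => hx.1
    have hGvol : ENNReal.ofReal ((1 - s) * q) < volume G := by
      by_contra hcon
      push_neg at hcon
      have hcover : Set.Ioo (0:ℝ) q ⊆ G ∪ {x ∈ Set.Ioo (0:ℝ) q | α < |h x - c|} := by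
        intro x hx
        rcases le_or_gt (|h x - c|) α with h1 | h1
        · exact Or.inl ⟨hx, h1⟩
        · exact Or.inr ⟨hx, h1⟩
      have h1 : volume (Set.Ioo (0:ℝ) q) ≤ volume G +
          volume {x ∈ Set.Ioo (0:ℝ) q | α < |h x - c|} :=
        le_trans (measure_mono hcover) (measure_union_le _ _)
      rw [Real.volume_Ioo, sub_zero] at h1
      rw [hvolE] at hc
      have h2 : volume G + volume {x ∈ Set.Ioo (0:ℝ) q | α < |h x - c|}
          < ENNReal.ofReal ((1 - s) * q) + ENNReal.ofReal (s * q) :=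
        ENNReal.add_lt_add_of_le_of_lt (lt_of_le_of_lt hcon ENNReal.ofReal_lt_top).ne hcon hc
      rw [← ENNReal.ofReal_add h1sq.le hsq.le] at h2
      have : (1 - s) * q + s * q = q := by ring
      rw [this] at h2
      exact absurd (lt_of_le_of_lt h1 h2) (lt_irrefl _)
    have hGne : G.Nonempty := by
      rcases Set.eq_empty_or_nonempty G with he | hne
      · rw [he, measure_empty] at hGvol
        exact absurd hGvol (by simp)
      · exact hne
    have hGbddA : BddAbove G := ⟨q, fun x hx => (hGsub hx).2.le⟩
    have hGbddB : BddBelow G := ⟨0, fun x hx => (hGsub hx).1.le⟩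
    set a := sInf G with ha
    set b := sSup G with hb
    have hGIcc : G ⊆ Set.Icc a b := fun x hx => ⟨csInf_le hGbddB hx, le_csSup hGbddA hx⟩
    have hba : (1 - s) * q < b - a := by
      have h1 : volume G ≤ ENNReal.ofReal (b - a) := by
        calc volume G ≤ volume (Set.Icc a b) := measure_mono hGIcc
          _ = ENNReal.ofReal (b - a) := Real.volume_Icc
      have := lt_of_lt_of_le hGvol h1
      exact (ENNReal.ofReal_lt_ofReal_iff_of_nonneg h1sq.le).mp this
    set ε := (b - a - (1 - s) * q) / 2 with hε
    have hεpos : 0 < ε := by rw [hε]; linarith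
    obtain ⟨u, huG, hua⟩ := Real.lt_sInf_add_pos hGne hεpos
    obtain ⟨v, hvG, hvb⟩ := exists_lt_of_lt_csSup hGne (show b - ε < b by linarith)
    rw [← ha] at hua
    have huv : u + (1 - s) * q < v := by
      have h1 : a ≤ u := csInf_le hGbddB huG
      have h2 : v ≤ b := le_csSup hGbddA hvG
      rw [hε] at hua hvb
      linarith
    set w := u + (1 - s) * q with hw
    have huE : u ∈ Set.Ioo (0:ℝ) q := hGsub huG
    have hvE : v ∈ Set.Ioo (0:ℝ) q := hGsub hvG
    have hwE : w ∈ Set.Ioo (0:ℝ) q := ⟨by have := huE.1; positivity, lt_trans huv hvE.2⟩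
    have hwG : w ∈ G := by
      refine ⟨hwE, ?_⟩
      have h1 : h w ≤ h u := hmono huE hwE (by rw [hw]; linarith)
      have h2 : h v ≤ h w := hmono hwE hvE huv.le
      have h3 := abs_le.mp huG.2
      have h4 := abs_le.mp hvG.2
      rw [abs_le]
      constructor <;> linarith
    have huIoo : u ∈ Set.Ioo 0 (s * q) := by
      refine ⟨huE.1, ?_⟩
      have := hvE.2
      nlinarith
    have hmle : m ≤ h u - h w := csInf_le hIbdd ⟨u, huIoo, rfl⟩
    have h3 := abs_le.mp huG.2
    have h4 := abs_le.mp hwG.2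
    linarith
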